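/- arXiv:2303.15146 — 5 statements merged into one kernel-verified Lean document; each statement's English description precedes it below -/
import Mathlib

section
/- Let A be a complex Banach algebra with identity and let a ∈ A. The following conditions are equivalent: (1) a is Hirano invertible; (2) a − a³ is nilpotent; (3) a is the sum of a tripotent and a nilpotent that commute with each other. -/
/-!
All elements occurring in each implication commute, so they live in a commutative subring and the
algebra can be done there.

If `x = x a x`, then `a x` is idempotent and `(a - a² x)² = (a² - a x)(1 - a x)`, so
`a - a³ = (a - a² x) - a (a² - a x)` is nilpotent. If `a - a³` is nilpotent, then `(a² + a)/2` and
`(a² - a)/2` are idempotent modulo the nilradical; lifting them to idempotents `p, q` gives the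
tripotent `e = p - q` with `a - e` nilpotent. Finally, for `e³ = e` and `n` nilpotent,
`x = e (1 + e n)⁻¹` satisfies `(e + n) x = e²`, which makes it the Hirano inverse of `e + n`.
-/

/-- An element of a ring is *Hirano invertible* if there exists `x` with
`a * x = x * a`, `x = x * a * x`, and `a ^ 2 - a * x` nilpotent. -/
def IsHirano {R : Type*} [Ring R] (a : R) : Prop :=
  ∃ x : R, a * x = x * a ∧ x = x * a * x ∧ IsNilpotent (a ^ 2 - a * x)

universe u

open scoped IsMulCommutative in
theorem exists_injective_ringHom_of_commute {R : Type u} [Ring R] {a b : R} (h : Commute a b) :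
    ∃ (S : Type u) (_ : CommRing S) (f : S →+* R),
      Function.Injective f ∧ a ∈ f.range ∧ b ∈ f.range := by
  set s : Set R := {a, b}
  have hcomm : ∀ x ∈ s, ∀ y ∈ s, x * y = y * x := by
    rintro x (rfl | rfl) y (rfl | rfl)
    exacts [rfl, h.eq, h.eq.symm, rfl]
  have := Subring.isMulCommutative_closure hcomm
  exact ⟨Subring.closure s, inferInstance, (Subring.closure s).subtype, Subtype.val_injective,
    ⟨⟨a, Subring.subset_closure (by simp [s])⟩, rfl⟩,
    ⟨⟨b, Subring.subset_closure (by simp [s])⟩, rfl⟩⟩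

section CommRing

variable {R : Type*} [CommRing R]

theorem exists_isIdempotentElem_isNilpotent_sub {u : R} (h : IsNilpotent (u ^ 2 - u)) :
    ∃ p : R, IsIdempotentElem p ∧ IsNilpotent (p - u) := by
  let f := Ideal.Quotient.mk (nilradical R)
  have hker : ∀ x ∈ RingHom.ker f, IsNilpotent x := by
    intro x hx
    rwa [Ideal.mk_ker, mem_nilradical] at hx
  have hu : IsIdempotentElem (f u) := by
    rw [IsIdempotentElem, ← map_mul, Ideal.Quotient.eq, ← sq]
    exact mem_nilradical.mpr h
  obtain ⟨p, hp, hpu⟩ := exists_isIdempotentElem_eq_of_ker_isNilpotent f hker (f u) ⟨u, rfl⟩ hu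
  exact ⟨p, hp, mem_nilradical.mp (Ideal.Quotient.eq.mp hpu)⟩

theorem isNilpotent_sub_pow_three_of_isHirano {a : R} (h : IsHirano a) :
    IsNilpotent (a - a ^ 3) := by
  obtain ⟨x, -, hx, hnil⟩ := h
  have hax : (a * x) ^ 2 = a * x := by linear_combination (-a) * hx
  have hsq : (a - a ^ 2 * x) ^ 2 = (a ^ 2 - a * x) * (1 - a * x) := by
    linear_combination (a ^ 2 - 1) * hax
  have hb : IsNilpotent (a - a ^ 2 * x) :=
    .of_pow (hsq ▸ (Commute.all _ _).isNilpotent_mul_right hnil)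
  rw [show a - a ^ 3 = (a - a ^ 2 * x) - a * (a ^ 2 - a * x) by ring]
  exact (Commute.all _ _).isNilpotent_sub hb ((Commute.all _ _).isNilpotent_mul_left hnil)

theorem exists_pow_three_eq_add_of_isNilpotent_sub_pow_three (h2 : IsUnit (2 : R)) {a : R}
    (h : IsNilpotent (a - a ^ 3)) : ∃ e n : R, e ^ 3 = e ∧ IsNilpotent n ∧ a = e + n := by
  obtain ⟨t, ht⟩ := h2.exists_right_inv
  have hp : IsNilpotent ((t * (a ^ 2 + a)) ^ 2 - t * (a ^ 2 + a)) := by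
    rw [show (t * (a ^ 2 + a)) ^ 2 - t * (a ^ 2 + a) = -(t * t * (a + 2)) * (a - a ^ 3) by
      linear_combination (t * (a ^ 2 + a)) * ht]
    exact (Commute.all _ _).isNilpotent_mul_left h
  have hq : IsNilpotent ((t * (a ^ 2 - a)) ^ 2 - t * (a ^ 2 - a)) := by
    rw [show (t * (a ^ 2 - a)) ^ 2 - t * (a ^ 2 - a) = -(t * t * (a - 2)) * (a - a ^ 3) by
      linear_combination (t * (a ^ 2 - a)) * ht]
    exact (Commute.all _ _).isNilpotent_mul_left h
  obtain ⟨p, hp, hpu⟩ := exists_isIdempotentElem_isNilpotent_sub hp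
  obtain ⟨q, hq, hqu⟩ := exists_isIdempotentElem_isNilpotent_sub hq
  refine ⟨p - q, a - (p - q), ?_, ?_, by ring⟩
  · linear_combination (p + 1 - 3 * q) * hp.eq + (3 * p - q - 1) * hq.eq
  · rw [show a - (p - q) = (q - t * (a ^ 2 - a)) - (p - t * (a ^ 2 + a)) by
      linear_combination (-a) * ht]
    exact (Commute.all _ _).isNilpotent_sub hqu hpu

theorem isHirano_add_of_pow_three_eq {e n : R} (he : e ^ 3 = e) (hn : IsNilpotent n) :
    IsHirano (e + n) := by
  obtain ⟨u, hu⟩ := ((Commute.all e n).isNilpotent_mul_left hn).isUnit_one_add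
  set v : R := ↑u⁻¹
  have huv : (1 + e * n) * v = 1 := hu ▸ u.mul_inv
  have hax : (e + n) * (e * v) = e ^ 2 := by linear_combination e ^ 2 * huv - n * v * he
  refine ⟨e * v, mul_comm _ _, by linear_combination (-(e * v)) * hax - v * he, ?_⟩
  rw [hax, show (e + n) ^ 2 - e ^ 2 = n * (2 * e + n) by ring]
  exact (Commute.all _ _).isNilpotent_mul_right hn

end CommRing

section Ring

variable {R : Type*} [Ring R]

theorem IsHirano.isNilpotent_sub_pow_three {a : R} (h : IsHirano a) : IsNilpotent (a - a ^ 3) := by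
  obtain ⟨x, hax, hx, hnil⟩ := h
  obtain ⟨S, _, f, hf, ⟨a, rfl⟩, ⟨x, rfl⟩⟩ := exists_injective_ringHom_of_commute hax
  simp only [← map_mul, ← map_pow, ← map_sub, hf.eq_iff, IsNilpotent.map_iff hf] at hx hnil ⊢
  exact isNilpotent_sub_pow_three_of_isHirano ⟨x, mul_comm _ _, hx, hnil⟩

theorem Commute.isHirano_add {e n : R} (hen : Commute e n) (he : e ^ 3 = e)
    (hn : IsNilpotent n) : IsHirano (e + n) := by
  obtain ⟨S, _, f, hf, ⟨e, rfl⟩, ⟨n, rfl⟩⟩ := exists_injective_ringHom_of_commute hen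
  simp only [← map_pow, hf.eq_iff, IsNilpotent.map_iff hf] at he hn
  obtain ⟨x, hax, hx, hnil⟩ := isHirano_add_of_pow_three_eq he hn
  refine ⟨f x, ?_, ?_, ?_⟩ <;> simp only [← map_add, ← map_mul, ← map_pow, ← map_sub]
  · rw [hax]
  · rw [← hx]
  · exact hnil.map f

theorem exists_commute_pow_three_eq_add_of_isNilpotent_sub_pow_three (h2 : IsUnit (2 : R))
    {a : R} (h : IsNilpotent (a - a ^ 3)) :
    ∃ e n : R, e ^ 3 = e ∧ IsNilpotent n ∧ e * n = n * e ∧ a = e + n := by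
  obtain ⟨u, hu⟩ := h2
  have hau : Commute a ↑u⁻¹ := (hu ▸ Commute.ofNat_right a 2).units_inv_right
  obtain ⟨S, _, f, hf, ⟨a, rfl⟩, ⟨t, ht⟩⟩ := exists_injective_ringHom_of_commute hau
  have hS2 : IsUnit (2 : S) := by
    refine IsUnit.of_mul_eq_one t (hf ?_)
    rw [map_mul, ht, map_ofNat, ← hu, u.mul_inv, map_one]
  simp only [← map_pow, ← map_sub, IsNilpotent.map_iff hf] at h
  obtain ⟨e, n, he, hn, rfl⟩ := exists_pow_three_eq_add_of_isNilpotent_sub_pow_three hS2 h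
  refine ⟨f e, f n, ?_, hn.map f, ?_, map_add f e n⟩
  · rw [← map_pow, he]
  · rw [← map_mul, ← map_mul, mul_comm]

end Ring

theorem hirano_tfae_general {A : Type*} [NormedRing A] [NormedAlgebra ℂ A]
    (a : A) :
    (IsHirano a ↔ IsNilpotent (a - a ^ 3)) ∧
    (IsHirano a ↔ ∃ e n : A, e ^ 3 = e ∧ IsNilpotent n ∧ e * n = n * e ∧ a = e + n) := by
  have h2 : IsUnit (2 : A) := by
    simpa only [map_ofNat] using (IsUnit.mk0 (2 : ℂ) two_ne_zero).map (algebraMap ℂ A)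
  have h12 : IsHirano a → IsNilpotent (a - a ^ 3) := IsHirano.isNilpotent_sub_pow_three
  have h23 := exists_commute_pow_three_eq_add_of_isNilpotent_sub_pow_three h2 (a := a)
  have h31 : (∃ e n : A, e ^ 3 = e ∧ IsNilpotent n ∧ e * n = n * e ∧ a = e + n) → IsHirano a := by
    rintro ⟨e, n, he, hn, hen, rfl⟩
    exact Commute.isHirano_add hen he hn
  exact ⟨⟨h12, h31 ∘ h23⟩, ⟨h23 ∘ h12, h31⟩⟩

/-- In a complex Banach algebra with identity, `a` is Hirano invertible iff
`a - a ^ 3` is nilpotent, iff `a` is the sum of a commuting tripotent and nilpotent. -/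
theorem hirano_tfae {A : Type*} [NormedRing A] [NormedAlgebra ℂ A] [CompleteSpace A]
    (a : A) :
    (IsHirano a ↔ IsNilpotent (a - a ^ 3)) ∧
    (IsHirano a ↔ ∃ e n : A, e ^ 3 = e ∧ IsNilpotent n ∧ e * n = n * e ∧ a = e + n) :=
  hirano_tfae_general a
end

section
/- Let A be a complex Banach algebra with identity and let a, b, c ∈ A. If a and b are Hirano invertible, then the upper triangular 2×2 matrix with rows (a, c) and (0, b) is Hirano invertible in the 2×2 matrix algebra M₂(A). -/
theorem IsHirano.map {R S F : Type*} [Ring R] [Ring S] [FunLike F R S] [RingHomClass F R S]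
    (f : F) {a : R} (h : IsHirano a) : IsHirano (f a) := by
  obtain ⟨x, hax, hxax, hn⟩ := h
  refine ⟨f x, ?_, ?_, ?_⟩
  · rw [← map_mul, hax, map_mul]
  · rw [← map_mul, ← map_mul, ← hxax]
  · simpa using hn.map f

section CommRing

variable {R : Type*} [CommRing R]

theorem exists_isIdempotentElem_isNilpotent_sub_s1 {t : R} (ht : IsNilpotent (t ^ 2 - t)) :
    ∃ e, IsIdempotentElem e ∧ IsNilpotent (t - e) := by
  have hker : ∀ r ∈ RingHom.ker (Ideal.Quotient.mk (nilradical R)), IsNilpotent r := by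
    simp [mem_nilradical]
  have hidem : IsIdempotentElem (Ideal.Quotient.mk (nilradical R) t) := by
    rw [IsIdempotentElem, ← map_mul, Ideal.Quotient.eq, mem_nilradical, ← pow_two]
    exact ht
  obtain ⟨e, he, hte⟩ :=
    exists_isIdempotentElem_eq_of_ker_isNilpotent _ hker _ ⟨t, rfl⟩ hidem
  rw [Ideal.Quotient.eq, mem_nilradical] at hte
  exact ⟨e, he, by simpa using hte.neg⟩

theorem isHirano_of_isIdempotentElem_of_isNilpotent {a e : R} (he : IsIdempotentElem e)
    (hn : IsNilpotent (a ^ 2 - e)) : IsHirano a := by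
  obtain ⟨u, hu⟩ := hn.isUnit_one_add
  have hax : a * (a * e * ↑u⁻¹) = e := by
    linear_combination (e * ↑u⁻¹) * hu.symm + e * u.mul_inv + ↑u⁻¹ * he.eq
  refine ⟨a * e * ↑u⁻¹, mul_comm _ _, ?_, by rwa [hax]⟩
  linear_combination (-(a * e * ↑u⁻¹)) * hax - (a * ↑u⁻¹) * he.eq

theorem isHirano_iff_isNilpotent_sub_pow_three_comm {a : R} :
    IsHirano a ↔ IsNilpotent (a - a ^ 3) := by
  constructor
  · rintro ⟨x, -, hxax, hn⟩
    have hsq : (a * (1 - a * x)) ^ 2 = (a ^ 2 - a * x) * (1 - a * x) := by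
      linear_combination (1 - a ^ 2) * a * hxax
    have hcomp : IsNilpotent (a * (1 - a * x)) :=
      IsNilpotent.of_pow (hsq ▸ (Commute.all _ _).isNilpotent_mul_right hn)
    convert (Commute.all _ _).isNilpotent_sub hcomp ((Commute.all a _).isNilpotent_mul_left hn)
      using 1
    ring
  · intro h
    obtain ⟨e, he, hn⟩ := exists_isIdempotentElem_isNilpotent_sub_s1 (t := a ^ 2) <| by
      convert ((Commute.all a _).isNilpotent_mul_left h).neg using 1
      ring
    exact isHirano_of_isIdempotentElem_of_isNilpotent he hn

end CommRing

open scoped IsMulCommutative in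
theorem isHirano_iff_isNilpotent_sub_pow_three {R : Type*} [Ring R] {a : R} :
    IsHirano a ↔ IsNilpotent (a - a ^ 3) := by
  constructor
  · rintro ⟨x, hax, hxax, hn⟩
    have : IsMulCommutative (Subring.closure {a, x}) := Subring.isMulCommutative_closure <| by
      rintro _ (rfl | rfl) _ (rfl | rfl) <;> simp [hax]
    let a' : Subring.closure {a, x} := ⟨a, Subring.subset_closure (by simp)⟩
    let x' : Subring.closure {a, x} := ⟨x, Subring.subset_closure (by simp)⟩
    have ha' : IsHirano a' :=
      ⟨x', Subtype.ext hax, Subtype.ext hxax,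
        (IsNilpotent.map_iff (Subring.closure _).subtype_injective).1 hn⟩
    exact (isHirano_iff_isNilpotent_sub_pow_three_comm.1 ha').map (Subring.closure {a, x}).subtype
  · intro h
    have : IsMulCommutative (Subring.closure {a}) := Subring.isMulCommutative_closure <| by simp
    let a' : Subring.closure {a} := ⟨a, Subring.subset_closure rfl⟩
    have ha' : IsNilpotent (a' - a' ^ 3) :=
      (IsNilpotent.map_iff (Subring.closure _).subtype_injective).1 h
    exact (isHirano_iff_isNilpotent_sub_pow_three_comm.2 ha').map (Subring.closure {a}).subtype

section UpperTriangular

variable {R : Type*} [Ring R]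

theorem exists_upperTriangular_pow_eq (a b c : R) (n : ℕ) :
    ∃ d, !![a, c; 0, b] ^ n = !![a ^ n, d; 0, b ^ n] := by
  induction n with
  | zero => exact ⟨0, by simp [Matrix.one_fin_two]⟩
  | succ n ih =>
    obtain ⟨d, hd⟩ := ih
    exact ⟨a ^ n * c + d * b, by simp [pow_succ, hd]⟩

theorem isNilpotent_upperTriangular {a b : R} (c : R) (ha : IsNilpotent a) (hb : IsNilpotent b) :
    IsNilpotent !![a, c; 0, b] := by
  obtain ⟨m, hm⟩ := ha
  obtain ⟨k, hk⟩ := hb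
  obtain ⟨d, hd⟩ := exists_upperTriangular_pow_eq a b c m
  obtain ⟨d', hd'⟩ := exists_upperTriangular_pow_eq a b c k
  refine ⟨m + k, ?_⟩
  rw [pow_add, hd, hd', hm, hk, Matrix.mul_fin_two]
  simpa using (Matrix.eta_fin_two (0 : Matrix (Fin 2) (Fin 2) R)).symm

end UpperTriangular

theorem hirano_upper_triangular_general {A : Type*} [NormedRing A] (a b c : A) (ha : IsHirano a)
    (hb : IsHirano b) :
    IsHirano (!![a, c; (0 : A), b] : Matrix (Fin 2) (Fin 2) A) := by
  rw [isHirano_iff_isNilpotent_sub_pow_three] at *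
  obtain ⟨d, hd⟩ := exists_upperTriangular_pow_eq a b c 3
  rw [hd, Matrix.of_sub_of]
  simpa using isNilpotent_upperTriangular (c - d) ha hb

/-- If `a, b` are Hirano invertible in a complex Banach algebra, then the upper
triangular matrix `!![a, c; 0, b]` is Hirano invertible in `M₂(A)`. -/
theorem hirano_upper_triangular {A : Type*} [NormedRing A] [NormedAlgebra ℂ A]
    [CompleteSpace A] (a b c : A) (ha : IsHirano a) (hb : IsHirano b) :
    IsHirano (!![a, c; (0 : A), b] : Matrix (Fin 2) (Fin 2) A) :=
  hirano_upper_triangular_general a b c ha hb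
end

section
/- Let A be a complex Banach algebra with identity, let A be an m×n matrix and B an n×m matrix with entries in A. If the product AB is Hirano invertible in the m×m matrix algebra Mₘ(A), then BA is Hirano invertible in the n×n matrix algebra Mₙ(A). -/
namespace Matrix

variable {R : Type*} [Ring R] {m n : Type*} [Fintype m] [Fintype n] [DecidableEq m] [DecidableEq n]

theorem mul_pow_succ_comm (P : Matrix m n R) (Q : Matrix n m R) (k : ℕ) :
    (Q * P) ^ (k + 1) = Q * (P * Q) ^ k * P := by
  induction k with
  | zero => simp
  | succ k ih => rw [pow_succ, ih, pow_succ]; simp only [Matrix.mul_assoc]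

theorem isNilpotent_mul_comm {P : Matrix m n R} {Q : Matrix n m R} (h : IsNilpotent (P * Q)) :
    IsNilpotent (Q * P) := by
  obtain ⟨k, hk⟩ := h
  exact ⟨k + 1, by rw [mul_pow_succ_comm, hk, Matrix.mul_zero, Matrix.zero_mul]⟩

theorem isHirano_mul_comm {A : Matrix m n R} {B : Matrix n m R} (h : IsHirano (A * B)) :
    IsHirano (B * A) := by
  obtain ⟨x, hcomm, hx, hnil⟩ := h
  have right_inv : A * B * (x * x) = x := by rw [← Matrix.mul_assoc, hcomm, ← hx]
  have left_inv : x * x * (A * B) = x := by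
    rw [Matrix.mul_assoc, ← hcomm, ← Matrix.mul_assoc, ← hx]
  have mul_y : B * A * (B * (x * x) * A) = B * x * A := calc
    _ = B * (A * B * (x * x)) * A := by simp only [Matrix.mul_assoc]
    _ = B * x * A := by rw [right_inv]
  have y_mul : B * (x * x) * A * (B * A) = B * x * A := calc
    _ = B * (x * x * (A * B)) * A := by simp only [Matrix.mul_assoc]
    _ = B * x * A := by rw [left_inv]
  refine ⟨B * (x * x) * A, by rw [mul_y, y_mul], ?_, ?_⟩
  · calc B * (x * x) * A = B * (x * (A * B * (x * x))) * A := by rw [right_inv]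
      _ = _ := by rw [y_mul]; simp only [Matrix.mul_assoc]
  · have defect : (B * A) ^ 2 - B * A * (B * (x * x) * A) = B * (A * B - x) * A := by
      rw [mul_y, sq, Matrix.mul_sub, Matrix.sub_mul]; simp only [Matrix.mul_assoc]
    have hnil_shifted : IsNilpotent (A * (B * (A * B - x))) := by
      rwa [← Matrix.mul_assoc, Matrix.mul_sub, ← sq]
    rw [defect]
    exact isNilpotent_mul_comm hnil_shifted

end Matrix

theorem hirano_mul_comm_general {𝒜 : Type*} [NormedRing 𝒜]
    {m n : ℕ} (A : Matrix (Fin m) (Fin n) 𝒜) (B : Matrix (Fin n) (Fin m) 𝒜)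
    (h : IsHirano (A * B)) : IsHirano (B * A) :=
  Matrix.isHirano_mul_comm h

/-- If `A * B` is Hirano invertible in `Mₘ(𝒜)`, then `B * A` is Hirano invertible
in `Mₙ(𝒜)`, for an `m × n` matrix `A` and an `n × m` matrix `B` over a complex
Banach algebra `𝒜`. -/
theorem hirano_mul_comm {𝒜 : Type*} [NormedRing 𝒜] [NormedAlgebra ℂ 𝒜] [CompleteSpace 𝒜]
    {m n : ℕ} (A : Matrix (Fin m) (Fin n) 𝒜) (B : Matrix (Fin n) (Fin m) 𝒜)
    (h : IsHirano (A * B)) : IsHirano (B * A) :=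
  hirano_mul_comm_general A B h
end

section
/- Let A be a complex Banach algebra with identity, let a ∈ A be Hirano invertible, and let b ∈ A be strongly Drazin invertible with strongly Drazin inverse b^D. If b^D a = 0 and b a b^π = 0 (where b^π = 1 − bb^D), then the 2×2 anti-triangular matrix with rows (a, 1) and (b, 0) is Hirano invertible in M₂(A). -/
/-- `y` is the *strongly Drazin inverse* of `b`: `b * y = y * b`, `y = y * b * y`,
and `b - b * y` is nilpotent. -/
def IsSDrazinInv {R : Type*} [Ring R] (b y : R) : Prop :=
  b * y = y * b ∧ y = y * b * y ∧ IsNilpotent (b - b * y)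

/-!
An element `m` is Hirano invertible exactly when `m ^ 2 - m ^ 4` is nilpotent: Newton's
method in the commutative ring `ℤ[m]` then yields an idempotent `g` with `m ^ 2 - g`
nilpotent, and `m * g * (1 + (m ^ 2 - g) * g)⁻¹` is the Hirano inverse.

If `y * x = 0`, then `x + y - (x + y) ^ 2 = x * (1 - x - y) + (y - y ^ 2)` is a sum of
nilpotents whose product in one order vanishes, so `x - x ^ 2` and `y - y ^ 2` nilpotent
force `x + y - (x + y) ^ 2` nilpotent. With `e = b * bD` (idempotent, commuting with `b`,
`b - e` nilpotent), the hypotheses read `e * a = 0` and `b * a * e = b * a`, and they make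
the square of `M = !![a, 1; b, 0]` the sum of the one-row matrices
`R₁ = !![a ^ 2 + b * (1 - e), a; 0, 0]`, `R₂ = !![0, 0; b * a, b]`, `R₃ = !![b * e, 0; 0, 0]`
with `R₂ * R₁ = 0` and `R₃ * (R₁ + R₂) = 0`. Each `Rᵢ - Rᵢ ^ 2` is nilpotent once `r - r ^ 2`
is, for the diagonal entry `r` of `Rᵢ`: for `a ^ 2 + b * (1 - e)` by the same splitting in `A`,
for `b` and `b * e` because `b - e` is nilpotent.
-/

section Nilpotent

variable {R : Type*} [Ring R] {x y c g : R}

theorem IsNilpotent.mul_swap (h : IsNilpotent (x * y)) : IsNilpotent (y * x) := by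
  obtain ⟨n, hn⟩ := h
  exact ⟨n + 1, by rw [_root_.pow_succ, ← mul_assoc, mul_pow_mul, hn, mul_zero, zero_mul]⟩

theorem isNilpotent_add_of_mul_eq_zero (hyx : y * x = 0) (hx : IsNilpotent x)
    (hy : IsNilpotent y) : IsNilpotent (x + y) := by
  obtain ⟨m, hm⟩ := hx
  obtain ⟨n, hn⟩ := hy
  have hpow : ∀ k : ℕ, ∃ c, (x + y) ^ k = x ^ k + c * y := by
    intro k
    induction k with
    | zero => exact ⟨0, by simp⟩
    | succ k ih =>
      obtain ⟨c, hc⟩ := ih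
      exact ⟨x ^ k + c * y, by rw [pow_succ, hc, pow_succ]; noncomm_ring [hyx]⟩
  have hy_mul_pow : ∀ k : ℕ, y * (x + y) ^ k = y ^ (k + 1) := by
    intro k
    induction k with
    | zero => simp
    | succ k ih =>
      rw [pow_succ, ← mul_assoc, ih, mul_add, pow_succ y k, mul_assoc _ y x, hyx, mul_zero,
        zero_add, ← pow_succ, ← pow_succ]
  obtain ⟨c, hc⟩ := hpow m
  refine ⟨m + n, ?_⟩
  rw [pow_add, hc, hm, zero_add, mul_assoc, hy_mul_pow, pow_succ', hn, mul_zero, mul_zero]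

theorem isNilpotent_sub_sq_of_isIdempotentElem (hg : IsIdempotentElem g) (hcg : Commute c g)
    (h : IsNilpotent (c - g)) : IsNilpotent (c - c ^ 2) := by
  have hfactor : c - c ^ 2 = (c - g) * (1 - c - g) := by
    rw [mul_sub, mul_sub, mul_one, sub_mul, sub_mul, hcg.eq, hg.eq, sq]
    abel
  rw [hfactor]
  refine Commute.isNilpotent_mul_right ?_ h
  exact ((Commute.one_right _).sub_right ((Commute.refl c).sub_left hcg.symm)).sub_right
    (hcg.sub_left (Commute.refl g))

theorem isNilpotent_add_sub_sq_of_mul_eq_zero (hyx : y * x = 0)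
    (hx : IsNilpotent (x - x ^ 2)) (hy : IsNilpotent (y - y ^ 2)) :
    IsNilpotent (x + y - (x + y) ^ 2) := by
  have hsplit : x + y - (x + y) ^ 2 = x * (1 - x - y) + (y - y ^ 2) := by
    noncomm_ring [hyx]
  have hswap : (1 - x - y) * x = x - x ^ 2 := by noncomm_ring [hyx]
  have horth : (y - y ^ 2) * (x * (1 - x - y)) = 0 := by
    rw [sq, sub_mul, mul_assoc y y, ← mul_assoc y x, hyx]
    simp
  rw [hsplit]
  exact isNilpotent_add_of_mul_eq_zero horth (by rw [← hswap] at hx; exact hx.mul_swap) hy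

end Nilpotent

theorem isHirano_of_isIdempotentElem {S : Type*} [CommRing S] {a g : S}
    (hg : IsIdempotentElem g) (h : IsNilpotent (a ^ 2 - g)) : IsHirano a := by
  obtain ⟨v, hv⟩ : ∃ v, (1 + (a ^ 2 - g) * g) * v = 1 :=
    ⟨_, ((Commute.all _ _).isNilpotent_mul_right h).isUnit_one_add.mul_val_inv⟩
  have hax : a * (a * g * v) = g := by
    linear_combination g * hv + (v * g + v - a ^ 2 * v) * hg.eq
  refine ⟨a * g * v, mul_comm _ _, ?_, by rwa [hax]⟩
  linear_combination (-(a * g * v)) * hax - (a * v) * hg.eq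

open Polynomial in
theorem isHirano_of_isNilpotent_sq_sub_sq_of_comm {S : Type*} [CommRing S] {a : S}
    (h : IsNilpotent (a ^ 2 - (a ^ 2) ^ 2)) : IsHirano a := by
  have hroot : IsNilpotent ((a ^ 2) ^ 2 - a ^ 2) := by rw [← neg_sub]; exact h.neg
  have hderiv : IsUnit (2 * a ^ 2 - 1) := by
    have hsq : (2 * a ^ 2 - 1) ^ 2 = 1 + 4 * ((a ^ 2) ^ 2 - a ^ 2) := by ring
    refine (isUnit_pow_iff two_ne_zero).mp ?_
    rw [hsq]
    exact ((Commute.all _ _).isNilpotent_mul_left hroot).isUnit_one_add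
  obtain ⟨g, ⟨hsub, hg⟩, -⟩ :=
    (X ^ 2 - X : ℤ[X]).existsUnique_nilpotent_sub_and_aeval_eq_zero (x := a ^ 2)
      (by simpa using hroot) (by simpa [map_ofNat] using hderiv)
  refine isHirano_of_isIdempotentElem ?_ hsub
  simp only [map_sub, map_pow, aeval_X, sub_eq_zero] at hg
  rwa [IsIdempotentElem, ← sq]

open scoped IsMulCommutative in
theorem isHirano_iff_isNilpotent_sq_sub_sq {R : Type*} [Ring R] {a : R} :
    IsHirano a ↔ IsNilpotent (a ^ 2 - (a ^ 2) ^ 2) := by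
  constructor
  · rintro ⟨x, hax, hxax, hnil⟩
    refine isNilpotent_sub_sq_of_isIdempotentElem (g := a * x) ?_ ?_ hnil
    · rw [IsIdempotentElem, mul_assoc, ← mul_assoc x, ← hxax]
    · exact ((Commute.refl a).mul_right hax).pow_left 2
  · intro h
    let S := Algebra.adjoin ℤ {a}
    let a' : S := ⟨a, Algebra.self_mem_adjoin_singleton ℤ a⟩
    have h' : IsNilpotent (a' ^ 2 - (a' ^ 2) ^ 2) :=
      (IsNilpotent.map_iff (f := S.val) Subtype.val_injective).mp h
    exact (isHirano_of_isNilpotent_sq_sub_sq_of_comm h').map S.val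

theorem Matrix.zero_fin_two {α : Type*} [Zero α] :
    (0 : Matrix (Fin 2) (Fin 2) α) = !![0, 0; 0, 0] := by
  ext i j
  fin_cases i <;> fin_cases j <;> rfl

section Matrix

variable {A : Type*} [Ring A]

theorem isNilpotent_fin_two_top_row {x : A} (y : A) (hx : IsNilpotent x) :
    IsNilpotent !![x, y; 0, 0] := by
  obtain ⟨n, hn⟩ := hx
  have hpow : ∀ k : ℕ, !![x, y; 0, 0] ^ (k + 1) = !![x ^ (k + 1), x ^ k * y; 0, 0] := by
    intro k
    induction k with
    | zero => simp
    | succ k ih =>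
      rw [pow_succ _ (k + 1), ih, Matrix.mul_fin_two]
      simp [← pow_succ]
  refine ⟨n + 1, ?_⟩
  rw [hpow, pow_succ, hn, Matrix.zero_fin_two]
  simp

theorem isNilpotent_fin_two_bottom_row (y : A) {z : A} (hz : IsNilpotent z) :
    IsNilpotent !![0, 0; y, z] := by
  obtain ⟨n, hn⟩ := hz
  have hpow : ∀ k : ℕ, !![0, 0; y, z] ^ (k + 1) = !![0, 0; z ^ k * y, z ^ (k + 1)] := by
    intro k
    induction k with
    | zero => simp
    | succ k ih =>
      rw [pow_succ _ (k + 1), ih, Matrix.mul_fin_two]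
      simp [← pow_succ]
  refine ⟨n + 1, ?_⟩
  rw [hpow, pow_succ, hn, Matrix.zero_fin_two]
  simp

theorem isNilpotent_sub_sq_fin_two_top_row {x : A} (y : A) (hx : IsNilpotent (x - x ^ 2)) :
    IsNilpotent (!![x, y; 0, 0] - !![x, y; 0, 0] ^ 2) := by
  have hsq : !![x, y; 0, 0] - !![x, y; 0, 0] ^ 2 = !![x - x ^ 2, y - x * y; 0, 0] := by
    simp [sq]
  rw [hsq]
  exact isNilpotent_fin_two_top_row _ hx

theorem isNilpotent_sub_sq_fin_two_bottom_row (y : A) {z : A} (hz : IsNilpotent (z - z ^ 2)) :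
    IsNilpotent (!![0, 0; y, z] - !![0, 0; y, z] ^ 2) := by
  have hsq : !![0, 0; y, z] - !![0, 0; y, z] ^ 2 = !![0, 0; y - z * y, z - z ^ 2] := by
    simp [sq]
  rw [hsq]
  exact isNilpotent_fin_two_bottom_row _ hz

end Matrix

section SpectralIdempotent

variable {A : Type*} [Ring A] {a b e : A}

theorem isNilpotent_mul_sub_sq_of_isNilpotent_sub (he : IsIdempotentElem e)
    (hbe : Commute b e) (hnil : IsNilpotent (b - e)) : IsNilpotent (b * e - (b * e) ^ 2) := by
  refine isNilpotent_sub_sq_of_isIdempotentElem he (hbe.mul_left (Commute.refl e)) ?_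
  rw [show b * e - e = (b - e) * e by rw [sub_mul, he.eq]]
  exact (hbe.sub_left (Commute.refl e)).isNilpotent_mul_right hnil

theorem isNilpotent_mul_one_sub_sub_sq_of_isNilpotent_sub (he : IsIdempotentElem e)
    (hbe : Commute b e) (hnil : IsNilpotent (b - e)) :
    IsNilpotent (b * (1 - e) - (b * (1 - e)) ^ 2) := by
  refine isNilpotent_sub_sq_of_isIdempotentElem .zero (Commute.zero_right _) ?_
  rw [sub_zero, show b * (1 - e) = (b - e) * (1 - e) by
    rw [sub_mul _ e, he.mul_one_sub_self, sub_zero]]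
  exact ((Commute.one_right _).sub_right (hbe.sub_left (Commute.refl e))).isNilpotent_mul_right
    hnil

theorem mul_sq_add_mul_one_sub_eq_zero (he : IsIdempotentElem e) (hbe : Commute b e)
    (hea : e * a = 0) : e * (a ^ 2 + b * (1 - e)) = 0 := by
  rw [mul_add, ← mul_assoc, ← hbe.eq, mul_assoc b, he.mul_one_sub_self, sq, ← mul_assoc, hea]
  simp

theorem isNilpotent_sq_sub_sq_anti_triangular (ha : IsNilpotent (a ^ 2 - (a ^ 2) ^ 2))
    (he : IsIdempotentElem e) (hbe : Commute b e) (hnil : IsNilpotent (b - e))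
    (hea : e * a = 0) (hbae : b * a * e = b * a) :
    IsNilpotent (!![a, 1; b, (0 : A)] ^ 2 - (!![a, 1; b, (0 : A)] ^ 2) ^ 2) := by
  have hbaa : b * a * a = 0 := by rw [← hbae, mul_assoc _ e, hea, mul_zero]
  have hev := mul_sq_add_mul_one_sub_eq_zero he hbe hea
  have hcorner : IsNilpotent (a ^ 2 + b * (1 - e) - (a ^ 2 + b * (1 - e)) ^ 2) := by
    refine isNilpotent_add_sub_sq_of_mul_eq_zero ?_ ha
      (isNilpotent_mul_one_sub_sub_sq_of_isNilpotent_sub he hbe hnil)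
    rw [mul_one_sub, sub_mul, sq, ← mul_assoc, hbaa, mul_assoc b e, ← mul_assoc e, hea]
    simp
  have hsplit : !![a, 1; b, (0 : A)] ^ 2
      = (!![a ^ 2 + b * (1 - e), a; 0, 0] + !![0, 0; b * a, b]) + !![b * e, 0; 0, 0] := by
    rw [sq, Matrix.mul_fin_two]
    simp [sq, add_assoc, ← mul_add]
  rw [hsplit]
  have hR₂ := isNilpotent_sub_sq_fin_two_bottom_row (b * a)
    (isNilpotent_sub_sq_of_isIdempotentElem he hbe hnil)
  have hR₃ := isNilpotent_sub_sq_fin_two_top_row 0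
    (isNilpotent_mul_sub_sq_of_isNilpotent_sub he hbe hnil)
  refine isNilpotent_add_sub_sq_of_mul_eq_zero ?_
    (isNilpotent_add_sub_sq_of_mul_eq_zero ?_ (isNilpotent_sub_sq_fin_two_top_row a hcorner) hR₂)
    hR₃
  · rw [mul_add, Matrix.mul_fin_two, Matrix.mul_fin_two, Matrix.zero_fin_two]
    simp [mul_assoc, hea, hev]
  · rw [Matrix.mul_fin_two, Matrix.zero_fin_two]
    have hbav : b * a * (a ^ 2 + b * (1 - e)) = 0 := by rw [← hbae, mul_assoc, hev, mul_zero]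
    simp [hbav, hbaa]

end SpectralIdempotent

theorem hirano_anti_triangular_general {A : Type*} [NormedRing A] (a b bD : A) (ha : IsHirano a)
    (hb : IsSDrazinInv b bD) (h1 : bD * a = 0) (h2 : b * a * (1 - b * bD) = 0) :
    IsHirano (!![a, 1; b, (0 : A)] : Matrix (Fin 2) (Fin 2) A) := by
  obtain ⟨hcomm, hbDb, hnil⟩ := hb
  rw [isHirano_iff_isNilpotent_sq_sub_sq] at ha ⊢
  refine isNilpotent_sq_sub_sq_anti_triangular ha ?_ ((Commute.refl b).mul_right hcomm) hnil
    (by rw [mul_assoc, h1, mul_zero]) ?_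
  · rw [IsIdempotentElem, mul_assoc, ← mul_assoc bD, ← hbDb]
  · rw [mul_sub, mul_one, sub_eq_zero] at h2
    exact h2.symm

/-- If `a` is Hirano invertible, `b` is strongly Drazin invertible with strong
Drazin inverse `bD`, `bD * a = 0` and `b * a * bπ = 0` where `bπ = 1 - b * bD`,
then `!![a, 1; b, 0]` is Hirano invertible in `M₂(A)`. -/
theorem hirano_anti_triangular {A : Type*} [NormedRing A] [NormedAlgebra ℂ A]
    [CompleteSpace A] (a b bD : A) (ha : IsHirano a) (hb : IsSDrazinInv b bD)
    (h1 : bD * a = 0) (h2 : b * a * (1 - b * bD) = 0) :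
    IsHirano (!![a, 1; b, (0 : A)] : Matrix (Fin 2) (Fin 2) A) :=
  hirano_anti_triangular_general a b bD ha hb h1 h2
end

section
/- Let A be a complex Banach algebra with identity and let b ∈ A. Then b is strongly Drazin invertible if and only if b − b² is nilpotent, and this holds if and only if b is the sum of an idempotent and a nilpotent that commute with each other. -/
open Polynomial

section Ring

variable {R : Type*} [Ring R]

def IsIdempotentAddNilpotent (b : R) : Prop :=
  ∃ p n : R, IsIdempotentElem p ∧ IsNilpotent n ∧ Commute p n ∧ b = p + n

namespace IsSDrazinInv

variable {b y : R}

lemma isIdempotentElem_mul (h : IsSDrazinInv b y) : IsIdempotentElem (b * y) := by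
  rw [IsIdempotentElem, mul_assoc, ← mul_assoc y, ← h.2.1]

lemma isIdempotentAddNilpotent (h : IsSDrazinInv b y) : IsIdempotentAddNilpotent b := by
  have hby : Commute (b * y) b := (Commute.refl b).mul_left (Commute.eq h.1.symm)
  exact ⟨b * y, b - b * y, h.isIdempotentElem_mul, h.2.2, hby.sub_right (.refl _),
    (add_sub_cancel _ _).symm⟩

end IsSDrazinInv

section IdempotentAddNilpotent

variable {p n : R}

lemma exists_isSDrazinInv_add (hp : IsIdempotentElem p) (hn : IsNilpotent n)
    (hpn : Commute p n) : ∃ y, IsSDrazinInv (p + n) y := by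
  obtain ⟨u, hu⟩ := hn.isUnit_one_add
  have hpu : Commute p ↑u⁻¹ := (hu ▸ (Commute.one_right p).add_right hpn).units_inv_right
  have hnu : Commute n ↑u⁻¹ := (hu ▸ (Commute.one_right n).add_right (.refl n)).units_inv_right
  have hcomm : Commute (p + n) (p * ↑u⁻¹) :=
    ((Commute.refl p).mul_right hpu).add_left (hpn.symm.mul_right hnu)
  have hmul : (p + n) * (p * ↑u⁻¹) = p := by
    rw [← mul_assoc, add_mul, hp.eq, ← hpn.eq, ← mul_one_add, ← hu, mul_assoc, Units.mul_inv,
      mul_one]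
  refine ⟨p * ↑u⁻¹, hcomm.eq, ?_, ?_⟩
  · rw [← hcomm.eq, hmul, ← mul_assoc, hp.eq]
  · rwa [hmul, add_sub_cancel_left]

lemma isNilpotent_add_sub_add_sq (hp : IsIdempotentElem p) (hn : IsNilpotent n)
    (hpn : Commute p n) : IsNilpotent (p + n - (p + n) ^ 2) := by
  have key : p + n - (p + n) ^ 2 = n * (1 - 2 * p - n) := by
    rw [sq, add_mul, mul_add, mul_add, hp.eq, hpn.eq]
    noncomm_ring
  have hcomm : Commute n (1 - 2 * p - n) :=
    ((Commute.one_right n).sub_right ((Commute.ofNat_right n 2).mul_right hpn.symm)).sub_right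
      (.refl n)
  exact key ▸ hcomm.isNilpotent_mul_right hn

end IdempotentAddNilpotent

lemma Polynomial.X_sub_X_sq_dvd_X_sub_one_sub_one_sub_pow_pow {S : Type*} [CommRing S] {k : ℕ}
    (hk : k ≠ 0) : (X - X ^ 2 : S[X]) ∣ X - (1 - (1 - X ^ k) ^ k) := by
  have hX : (X : S[X]) ∣ X - (1 - (1 - X ^ k) ^ k) := by
    simp [X_dvd_iff, coeff_zero_eq_eval_zero, hk]
  have hX1 : (X - C 1 : S[X]) ∣ X - (1 - (1 - X ^ k) ^ k) := by
    rw [dvd_iff_isRoot]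
    simp [hk]
  have hcop : IsCoprime (X : S[X]) (X - C 1) := by
    simpa using isCoprime_X_sub_C_of_isUnit_sub (R := S) (a := 0) (b := 1) (by simp)
  rw [show (X - X ^ 2 : S[X]) = -(X * (X - C 1)) by rw [map_one]; ring, neg_dvd]
  exact hcop.mul_dvd hX hX1

lemma IsNilpotent.isIdempotentAddNilpotent_of_sub_sq {b : R} (h : IsNilpotent (b - b ^ 2)) :
    IsIdempotentAddNilpotent b := by
  obtain ⟨m, hm⟩ := h
  set k := m + 1
  have hk : (b - b ^ 2) ^ k = 0 := pow_eq_zero_of_le m.le_succ hm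
  have hdvd := map_dvd (aeval b) <| pow_dvd_pow_of_dvd
    (X_sub_X_sq_dvd_X_sub_one_sub_one_sub_pow_pow (S := ℤ) (k := k) m.succ_ne_zero) k
  simp only [map_pow, map_sub, map_one, aeval_X, hk, zero_dvd_iff] at hdvd
  have hcomm : Commute (1 - (1 - b ^ k) ^ k) b := (Commute.one_left b).sub_left
    (((Commute.one_left b).sub_left ((Commute.refl b).pow_left k)).pow_left k)
  exact ⟨_, b - _, isIdempotentElem_one_sub_one_sub_pow_pow b k hk, ⟨k, hdvd⟩,
    hcomm.sub_right (.refl _), (add_sub_cancel _ _).symm⟩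

lemma isIdempotentAddNilpotent_iff_exists_isSDrazinInv {b : R} :
    IsIdempotentAddNilpotent b ↔ ∃ y, IsSDrazinInv b y :=
  ⟨fun ⟨_, _, hp, hn, hpn, hb⟩ ↦ hb ▸ exists_isSDrazinInv_add hp hn hpn,
    fun ⟨_, hy⟩ ↦ hy.isIdempotentAddNilpotent⟩

lemma isIdempotentAddNilpotent_iff_isNilpotent_sub_sq {b : R} :
    IsIdempotentAddNilpotent b ↔ IsNilpotent (b - b ^ 2) :=
  ⟨fun ⟨_, _, hp, hn, hpn, hb⟩ ↦ hb ▸ isNilpotent_add_sub_add_sq hp hn hpn,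
    IsNilpotent.isIdempotentAddNilpotent_of_sub_sq⟩

end Ring

theorem sdrazin_tfae_general {A : Type*} [NormedRing A]
    (b : A) :
    ((∃ y, IsSDrazinInv b y) ↔ IsNilpotent (b - b ^ 2)) ∧
    ((∃ y, IsSDrazinInv b y) ↔
      ∃ p n : A, p ^ 2 = p ∧ IsNilpotent n ∧ p * n = n * p ∧ b = p + n) := by
  rw [← isIdempotentAddNilpotent_iff_exists_isSDrazinInv,
    ← isIdempotentAddNilpotent_iff_isNilpotent_sub_sq]
  refine ⟨Iff.rfl, ?_⟩
  simp only [IsIdempotentAddNilpotent, IsIdempotentElem, Commute, SemiconjBy, sq]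

/-- In a complex Banach algebra with identity, `b` is strongly Drazin invertible iff
`b - b ^ 2` is nilpotent, iff `b` is the sum of a commuting idempotent and nilpotent. -/
theorem sdrazin_tfae {A : Type*} [NormedRing A] [NormedAlgebra ℂ A] [CompleteSpace A]
    (b : A) :
    ((∃ y, IsSDrazinInv b y) ↔ IsNilpotent (b - b ^ 2)) ∧
    ((∃ y, IsSDrazinInv b y) ↔
      ∃ p n : A, p ^ 2 = p ∧ IsNilpotent n ∧ p * n = n * p ∧ b = p + n) :=
  sdrazin_tfae_general b
end
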